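/- With up^[n] defined by up^[1] = ↑ and up^[n] = {up^[n-1] | *}, for every n ≥ 1 the game up^[n] is incomparable (fuzzy) with * = {0|0}. -/

import Mathlib

universe u

namespace SetTheory

/-- Pre-games, as formerly in Mathlib (`SetTheory.PGame`, since removed from Mathlib). -/
inductive PGame : Type (u + 1)
  | mk : ∀ α β : Type u, (α → PGame) → (β → PGame) → PGame

namespace PGame

/-- The pre-game with the given lists of left and right options (old Mathlib definition). -/
def ofLists (L R : List PGame.{u}) : PGame.{u} :=
  mk (ULift (Fin L.length)) (ULift (Fin R.length)) (fun i => L[i.down]) fun j => R[j.down]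

instance : Zero PGame := ⟨⟨PEmpty, PEmpty, PEmpty.elim, PEmpty.elim⟩⟩

noncomputable instance : Add PGame.{u} :=
  ⟨fun x y => by
    induction x generalizing y with | mk xl xr _ _ IHxl IHxr => _
    induction y with | mk yl yr yL yR IHyl IHyr => _
    have y := mk yl yr yL yR
    refine ⟨xl ⊕ yl, xr ⊕ yr, Sum.rec ?_ ?_, Sum.rec ?_ ?_⟩
    · exact fun i => IHxl i y
    · exact IHyl
    · exact fun i => IHxr i y
    · exact IHyr⟩

/-- The pair (x ≤ y, x ⧏ y), by the usual mutual recursion on both games. -/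
noncomputable def leLf : PGame.{u} → PGame.{u} → Prop × Prop := fun x => by
  induction x with | mk xl xr xL xR IHxl IHxr => _
  intro y
  induction y with | mk yl yr yL yR IHyl IHyr => _
  exact ((∀ i, (IHxl i (mk yl yr yL yR)).2) ∧ (∀ j, (IHyr j).2),
    (∃ i, (IHyl i).1) ∨ (∃ j, (IHxr j (mk yl yr yL yR)).1))

instance : LE PGame.{u} := ⟨fun x y => (leLf x y).1⟩

end PGame

end SetTheory

open SetTheory PGame

/-- star = {0|0} -/
noncomputable def star' : PGame := PGame.ofLists [0] [0]
/-- up = {0|*} -/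
noncomputable def up' : PGame := PGame.ofLists [0] [star']
/-- down = {*|0} -/
noncomputable def down' : PGame := PGame.ofLists [star'] [0]

/-- sum of n copies of up -/
noncomputable def nUp : ℕ → PGame
  | 0 => 0
  | n + 1 => nUp n + up'

/-- sum of n copies of down -/
noncomputable def nDown : ℕ → PGame
  | 0 => 0
  | n + 1 => nDown n + down'

/-- iterated up: up^[1] = ↑, up^[n] = {up^[n-1] | *} -/
noncomputable def upIter : ℕ → PGame
  | 0 => 0
  | 1 => up'
  | n + 2 => PGame.ofLists [upIter (n + 1)] [star']

/-- iterated down: down_[1] = ↓, down_[n] = {* | down_[n-1]} -/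
noncomputable def downIter : ℕ → PGame
  | 0 => 0
  | 1 => down'
  | n + 2 => PGame.ofLists [star'] [downIter (n + 1)]

/-
A game whose only right option is `*` is incomparable with `*`. It is not `≤ *`, since it would
then have to be `⧏ 0`, which forces its right option `*` to be `≤ 0`; and `*` is not `≤` it,
since that needs `* ⧏ *`. Both `↑ = {0 | *}` and `up^[n] = {up^[n-1] | *}` have this shape,
and `up^[0] = 0` is incomparable with `*` as well.
-/

namespace SetTheory.PGame

def LF (x y : PGame.{u}) : Prop := (leLf x y).2

scoped infix:50 " ⧏ " => LF

theorem not_zero_lf_zero : ¬ (0 : PGame.{u}) ⧏ 0 := by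
  rintro (⟨⟨⟩, _⟩ | ⟨⟨⟩, _⟩)

section OfLists

variable {L R L' R' : List PGame.{u}}

theorem ofLists_le_ofLists_iff : ofLists L R ≤ ofLists L' R' ↔
    (∀ x ∈ L, x ⧏ ofLists L' R') ∧ ∀ y ∈ R', ofLists L R ⧏ y := by
  simp only [List.forall_mem_iff_getElem]
  exact and_congr ⟨fun h i hi => h ⟨i, hi⟩, fun h i => h _ i.down.isLt⟩
    ⟨fun h j hj => h ⟨j, hj⟩, fun h j => h _ j.down.isLt⟩

theorem ofLists_lf_ofLists_iff : ofLists L R ⧏ ofLists L' R' ↔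
    (∃ y ∈ L', ofLists L R ≤ y) ∨ ∃ x ∈ R, x ≤ ofLists L' R' := by
  simp only [List.exists_mem_iff_getElem]
  exact or_congr ⟨fun ⟨i, h⟩ => ⟨i.down, i.down.isLt, h⟩, fun ⟨i, hi, h⟩ => ⟨⟨i, hi⟩, h⟩⟩
    ⟨fun ⟨j, h⟩ => ⟨j.down, j.down.isLt, h⟩, fun ⟨j, hj, h⟩ => ⟨⟨j, hj⟩, h⟩⟩

theorem ofLists_lf_zero_iff : ofLists L R ⧏ 0 ↔ ∃ x ∈ R, x ≤ 0 := by
  simp only [List.exists_mem_iff_getElem]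
  exact ⟨fun h => h.elim (fun ⟨i, _⟩ => i.elim) fun ⟨j, h⟩ => ⟨j.down, j.down.isLt, h⟩,
    fun ⟨j, hj, h⟩ => Or.inr ⟨⟨j, hj⟩, h⟩⟩

end OfLists

end SetTheory.PGame

open SetTheory.PGame

theorem star'_not_le_zero : ¬ star' ≤ 0 := fun h =>
  not_zero_lf_zero (h.1 ⟨0, Nat.one_pos⟩)

theorem zero_not_le_star' : ¬ 0 ≤ star' := fun h =>
  not_zero_lf_zero (h.2 ⟨0, Nat.one_pos⟩)

theorem not_star'_lf_star' : ¬ star' ⧏ star' := by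
  intro h
  simp only [star', ofLists_lf_ofLists_iff, List.mem_singleton, exists_eq_left] at h
  exact h.elim star'_not_le_zero zero_not_le_star'

theorem ofLists_not_le_star' (L : List PGame) : ¬ ofLists L [star'] ≤ star' := by
  intro h
  obtain ⟨x, hx, hle⟩ :=
    ofLists_lf_zero_iff.mp ((ofLists_le_ofLists_iff.mp h).2 0 (List.mem_singleton_self _))
  exact star'_not_le_zero (List.eq_of_mem_singleton hx ▸ hle)

theorem star'_not_le_ofLists (L : List PGame) : ¬ star' ≤ ofLists L [star'] := fun h =>
  not_star'_lf_star' ((ofLists_le_ofLists_iff.mp h).2 star' (List.mem_singleton_self _))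

theorem stmt6_general (n : ℕ) :
    ¬ upIter n ≤ star' ∧ ¬ star' ≤ upIter n := by
  match n with
  | 0 => exact ⟨zero_not_le_star', star'_not_le_zero⟩
  | 1 | m + 2 => exact ⟨ofLists_not_le_star' _, star'_not_le_ofLists _⟩

theorem stmt6 (n : ℕ) (hn : 1 ≤ n) :
    ¬ upIter n ≤ star' ∧ ¬ star' ≤ upIter n :=
  stmt6_general n
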